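/- arXiv:2512.24907 — 4 statements merged into one kernel-verified Lean document; each statement's English description precedes it below -/
import Mathlib

section
/- Every P5-free graph G with chromatic number at least 2 has a vertex v such that the chromatic number of the subgraph induced on the neighbourhood of v is at least χ(G)/3. -/
/-!
Let `m` be the largest chromatic number of a neighbourhood. Key fact: if `v - u - a` is an
induced path and `a` has a neighbour in a connected set `K` with no neighbour of `u` or `v`, then
`a` is complete to `K`, since otherwise some edge `c₁c₂` of `K` with `a ~ c₁`, `a ≁ c₂` makes
`v u a c₁ c₂` an induced `P5`.

In a component `D` of `G` fix `v` and colour `N(v)` with `m` colours. Every component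
`K ≠ {v}` of `D \ N(v)` has a neighbour `u ∈ N(v)`; colour `K ∩ N(u)` with `m` colours. Each
component of `K \ N(u)` has a neighbour `a ∈ K ∩ N(u)`, hence lies in `N(a)` by the key fact,
so `m` further colours suffice. Thus `χ(G) ≤ 3m`.
-/

open SimpleGraph

/-- The chromatic number of the subgraph of `G` induced on `S`, as a natural number. -/
noncomputable def chiS {V : Type*} [Fintype V] (G : SimpleGraph V) (S : Set V) : ℕ :=
  (G.induce S).chromaticNumber.toNat

/-- A graph is `P5`-free if it has no induced subgraph isomorphic to the five-vertex path. -/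
def P5Free {V : Type*} (G : SimpleGraph V) : Prop :=
  IsEmpty (SimpleGraph.pathGraph 5 ↪g G)

namespace SimpleGraph

variable {V : Type*} {G : SimpleGraph V}

lemma Colorable.induce_mono {S T : Set V} {n : ℕ} (hST : S ⊆ T)
    (h : (G.induce T).Colorable n) : (G.induce S).Colorable n :=
  h.of_hom (G.induceHomOfLE hST).toHom

lemma Colorable.induce_union {S T : Set V} {a b : ℕ} (hS : (G.induce S).Colorable a)
    (hT : (G.induce T).Colorable b) : (G.induce (S ∪ T)).Colorable (a + b) := by
  classical
  obtain ⟨cS, hcS⟩ := (colorable_iff_exists_bdd_nat_coloring a).1 hS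
  obtain ⟨cT, hcT⟩ := (colorable_iff_exists_bdd_nat_coloring b).1 hT
  let c : ↥(S ∪ T) → ℕ := fun x =>
    if h : x.1 ∈ S then cS ⟨x, h⟩ else a + cT ⟨x, x.2.resolve_left h⟩
  refine (colorable_iff_exists_bdd_nat_coloring _).2 ⟨Coloring.mk c ?_, fun x => ?_⟩
  · rintro ⟨x, hx⟩ ⟨y, hy⟩ hxy
    by_cases hxS : x ∈ S <;> by_cases hyS : y ∈ S <;> simp only [c, hxS, hyS, ↓reduceDIte]
    · exact cS.valid (show (G.induce S).Adj ⟨x, hxS⟩ ⟨y, hyS⟩ from hxy)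
    · have := hcS ⟨x, hxS⟩; omega
    · have := hcS ⟨y, hyS⟩; omega
    · have := cT.valid (show (G.induce T).Adj ⟨x, hx.resolve_left hxS⟩ ⟨y, hy.resolve_left hyS⟩
        from hxy)
      omega
  · change c x < a + b
    by_cases hxS : x.1 ∈ S <;> simp only [c, hxS, ↓reduceDIte]
    · exact (hcS _).trans_le (Nat.le_add_right a b)
    · exact Nat.add_lt_add_left (hcT _) a

lemma colorable_induce_singleton (x : V) {n : ℕ} (hn : 0 < n) :
    (G.induce {x}).Colorable n :=
  (chromaticNumber_le_iff_colorable.1 (chromaticNumber_le_one_of_subsingleton _)).mono hn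

lemma colorable_induce_of_forall_connectedComponent {S : Set V} {n : ℕ}
    (h : ∀ c : (G.induce S).ConnectedComponent,
      (G.induce (Subtype.val '' c.supp)).Colorable n) :
    (G.induce S).Colorable n :=
  colorable_iff_forall_connectedComponent.2 fun c =>
    (h c).of_hom ⟨fun x => ⟨x.1.1, x.1, x.2, rfl⟩, fun hxy => hxy⟩

lemma Reachable.eq_of_forall_not_adj {x y : V} (h : G.Reachable x y) (hx : ∀ z, ¬ G.Adj x z) :
    x = y := by
  obtain ⟨p⟩ := h
  cases p with
  | nil => rfl
  | cons hadj _ => exact absurd hadj (hx _)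

namespace ConnectedComponent

variable {S : Set V} {c : (G.induce S).ConnectedComponent}

lemma reachable_of_mem_image_supp {x y : S} (hx : x.1 ∈ Subtype.val '' c.supp)
    (hy : y.1 ∈ Subtype.val '' c.supp) : (G.induce S).Reachable x y := by
  rw [Subtype.val_injective.mem_set_image] at hx hy
  exact ConnectedComponent.exact (hx.trans hy.symm)

lemma mem_image_supp_of_adj {x y : V} (hx : x ∈ Subtype.val '' c.supp) (hy : y ∈ S)
    (hxy : G.Adj x y) : y ∈ Subtype.val '' c.supp := by
  obtain ⟨x, hx, rfl⟩ := hx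
  exact ⟨⟨y, hy⟩, c.mem_supp_of_adj_mem_supp hx hxy, rfl⟩

lemma exists_adj_of_diff {A : Set V}
    (c' : (G.induce (Subtype.val '' c.supp \ A)).ConnectedComponent) {w : V}
    (hw : w ∈ Subtype.val '' c.supp) (hw' : w ∉ Subtype.val '' c'.supp) :
    ∃ a ∈ A ∩ Subtype.val '' c.supp, ∃ b ∈ Subtype.val '' c'.supp, G.Adj a b := by
  obtain ⟨b, hb⟩ := c'.nonempty_supp
  obtain ⟨x, hx, hxb⟩ := b.2.1
  obtain ⟨y, hy, rfl⟩ := hw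
  obtain ⟨p⟩ := ConnectedComponent.exact (hx.trans hy.symm)
  obtain ⟨d, -, hd₁, hd₂⟩ :=
    p.exists_boundary_dart {z | z.1 ∈ Subtype.val '' c'.supp} ⟨b, hb, hxb.symm⟩ hw'
  have hd₁D : d.fst.1 ∈ Subtype.val '' c.supp := by
    obtain ⟨e, -, he⟩ := hd₁
    exact he ▸ e.2.1
  have hd₂D := mem_image_supp_of_adj hd₁D d.snd.2 d.adj
  refine ⟨d.snd.1, ⟨by_contra fun hA => hd₂ ?_, hd₂D⟩, d.fst.1, hd₁, d.adj.symm⟩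
  exact mem_image_supp_of_adj hd₁ ⟨hd₂D, hA⟩ d.adj

end ConnectedComponent

end SimpleGraph

namespace P5Free

variable {V : Type*} {G : SimpleGraph V}

lemma false_of_inducedPath (hP5 : P5Free G) {x₀ x₁ x₂ x₃ x₄ : V}
    (h₀₁ : G.Adj x₀ x₁) (h₁₂ : G.Adj x₁ x₂) (h₂₃ : G.Adj x₂ x₃) (h₃₄ : G.Adj x₃ x₄)
    (h₀₂ : ¬ G.Adj x₀ x₂) (h₀₃ : ¬ G.Adj x₀ x₃) (h₀₄ : ¬ G.Adj x₀ x₄)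
    (h₁₃ : ¬ G.Adj x₁ x₃) (h₁₄ : ¬ G.Adj x₁ x₄) (h₂₄ : ¬ G.Adj x₂ x₄) : False := by
  let f : Fin 5 → V := ![x₀, x₁, x₂, x₃, x₄]
  have hf : ∀ i j, G.Adj (f i) (f j) ↔ (pathGraph 5).Adj i j := by
    have := h₀₁.symm; have := h₁₂.symm; have := h₂₃.symm; have := h₃₄.symm
    have := mt G.adj_symm h₀₂; have := mt G.adj_symm h₀₃; have := mt G.adj_symm h₀₄
    have := mt G.adj_symm h₁₃; have := mt G.adj_symm h₁₄; have := mt G.adj_symm h₂₄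
    intro i j
    fin_cases i <;> fin_cases j <;> simp [f, pathGraph_adj, *]
  -- distinct vertices of `P5` have distinct neighbourhoods, so `f` is injective
  have hinj : f.Injective := fun i j hij => by
    have hij' : ∀ k, (pathGraph 5).Adj i k ↔ (pathGraph 5).Adj j k := fun k => by
      rw [← hf, ← hf, hij]
    clear hij
    simp only [pathGraph_adj] at hij'
    revert i j
    decide
  exact hP5.false ⟨⟨f, hinj⟩, hf _ _⟩

lemma adj_of_reachable (hP5 : P5Free G) {v u a : V} (hvu : G.Adj v u) (hua : G.Adj u a)
    (hva : ¬ G.Adj v a) {T : Set V} (hT : ∀ x ∈ T, ¬ G.Adj v x ∧ ¬ G.Adj u x) {b z : T}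
    (hab : G.Adj a b) (hbz : (G.induce T).Reachable b z) : G.Adj a z := by
  by_contra haz
  obtain ⟨p⟩ := hbz
  obtain ⟨d, -, hd₁, hd₂⟩ := p.exists_boundary_dart {x | G.Adj a x} hab haz
  exact hP5.false_of_inducedPath hvu hua hd₁ d.adj hva (hT _ d.fst.2).1 (hT _ d.snd.2).1
    (hT _ d.fst.2).2 (hT _ d.snd.2).2 hd₂

variable {m : ℕ}

lemma colorable_connectedComponent_two_mul (hP5 : P5Free G)
    (hN : ∀ w, (G.induce (G.neighborSet w)).Colorable m) {v u : V} (hvu : G.Adj v u)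
    {T : Set V} (hT : ∀ x ∈ T, ¬ G.Adj v x) (c : (G.induce T).ConnectedComponent) {d : V}
    (hd : d ∈ Subtype.val '' c.supp) (hud : G.Adj u d) :
    (G.induce (Subtype.val '' c.supp)).Colorable (2 * m) := by
  set D := Subtype.val '' c.supp
  have hDT : D ⊆ T := by
    rintro _ ⟨x, -, rfl⟩
    exact x.2
  rw [← Set.inter_union_sdiff D (G.neighborSet u), two_mul]
  refine ((hN u).induce_mono Set.inter_subset_right).induce_union ?_
  refine colorable_induce_of_forall_connectedComponent fun K => ?_
  obtain ⟨a, ⟨hua, haD⟩, b, hbK, hab⟩ :=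
    ConnectedComponent.exists_adj_of_diff K hd fun ⟨z, _, hzd⟩ => z.2.2 (hzd ▸ hud)
  refine (hN a).induce_mono ?_
  rintro _ ⟨z, hz, rfl⟩
  obtain ⟨b, hb, rfl⟩ := hbK
  exact hP5.adj_of_reachable hvu hua (hT a (hDT haD)) (fun x hx => ⟨hT x (hDT hx.1), hx.2⟩) hab
    (ConnectedComponent.reachable_of_mem_image_supp ⟨b, hb, rfl⟩ ⟨z, hz, rfl⟩)

theorem colorable_induce_three_mul (hP5 : P5Free G) (hm : 0 < m)
    (hN : ∀ w, (G.induce (G.neighborSet w)).Colorable m) (S : Set V) :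
    (G.induce S).Colorable (3 * m) := by
  refine colorable_induce_of_forall_connectedComponent fun c => ?_
  obtain ⟨v, hv⟩ := c.nonempty_supp
  set D := Subtype.val '' c.supp
  rw [← Set.inter_union_sdiff D (G.neighborSet v), show 3 * m = m + 2 * m by ring]
  refine ((hN v).induce_mono Set.inter_subset_right).induce_union ?_
  refine colorable_induce_of_forall_connectedComponent fun K => ?_
  by_cases hvK : v.1 ∈ Subtype.val '' K.supp
  · refine (colorable_induce_singleton v.1 (by omega)).induce_mono ?_
    rintro _ ⟨z, hz, rfl⟩
    obtain ⟨⟨_, _⟩, hv', rfl⟩ := hvK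
    have := (ConnectedComponent.reachable_of_mem_image_supp ⟨_, hv', rfl⟩ ⟨z, hz, rfl⟩
      ).eq_of_forall_not_adj fun y hy => y.2.2 hy
    exact congrArg Subtype.val this.symm
  · obtain ⟨u, ⟨hvu, -⟩, b, hbK, hub⟩ :=
      ConnectedComponent.exists_adj_of_diff K ⟨v, hv, rfl⟩ hvK
    exact hP5.colorable_connectedComponent_two_mul hN hvu (fun x hx => hx.2) K hbK hub

end P5Free

section chiS

variable {V : Type*} [Fintype V] {G : SimpleGraph V}

lemma colorable_chiS (S : Set V) : (G.induce S).Colorable (chiS G S) :=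
  colorable_chromaticNumber_of_fintype _

lemma chiS_le_of_colorable {S : Set V} {n : ℕ} (h : (G.induce S).Colorable n) :
    chiS G S ≤ n :=
  ENat.toNat_le_of_le_natCast h.chromaticNumber_le

end chiS

theorem stmt_0 {V : Type*} [Fintype V] (G : SimpleGraph V)
    (hP5 : P5Free G) (h2 : 2 ≤ chiS G Set.univ) :
    ∃ v : V, (chiS G Set.univ : ℝ) ≤ 3 * chiS G (G.neighborSet v) := by
  obtain ⟨x, y, hxy⟩ : ∃ x y, G.Adj x y := by
    by_contra! h
    have : (G.induce Set.univ).Colorable 1 := colorable_one_iff.2 <| by ext a b; simp [h]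
    have := chiS_le_of_colorable this
    omega
  have : Nonempty V := ⟨x⟩
  obtain ⟨v, hv⟩ := Finite.exists_max fun v => chiS G (G.neighborSet v)
  have hN (w : V) : (G.induce (G.neighborSet w)).Colorable (chiS G (G.neighborSet v)) :=
    (colorable_chiS _).mono (hv w)
  have hm : 0 < chiS G (G.neighborSet v) :=
    Nat.pos_of_ne_zero fun h0 => ((h0 ▸ hN x).isEmpty).false ⟨y, hxy⟩
  exact ⟨v, by exact_mod_cast chiS_le_of_colorable (hP5.colorable_induce_three_mul hm hN _)⟩
end

section
/- Let G be a P5-free graph and let (A,B) be an anticomplete pair of nonempty vertex subsets such that G[A] and G[B] are connected. Then every vertex in V(G)\(A∪B) is pure to at least one of A, B; that is, it is either complete or anticomplete to A, or complete or anticomplete to B. -/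
open SimpleGraph

/-- `v` is pure to `S`: `v` is complete or anticomplete to `S`. -/
def PureTo {V : Type*} (G : SimpleGraph V) (v : V) (S : Set V) : Prop :=
  (∀ s ∈ S, G.Adj v s) ∨ (∀ s ∈ S, ¬ G.Adj v s)

theorem stmt_1 {V : Type*} (G : SimpleGraph V) (hP5 : P5Free G)
    (A B : Set V) (hA : A.Nonempty) (hB : B.Nonempty) (hAB : Disjoint A B)
    (hanti : ∀ a ∈ A, ∀ b ∈ B, ¬ G.Adj a b)
    (hconnA : (G.induce A).Connected) (hconnB : (G.induce B).Connected) :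
    ∀ v, v ∉ A ∪ B → PureTo G v A ∨ PureTo G v B := by
  -- key lemma: mixed vertex on a connected set finds an edge with mixed endpoints
  have key : ∀ (S : Set V), (G.induce S).Connected → ∀ (v : V),
      (∃ s ∈ S, G.Adj v s) → (∃ t ∈ S, ¬ G.Adj v t) →
      ∃ x ∈ S, ∃ y ∈ S, G.Adj x y ∧ G.Adj v x ∧ ¬ G.Adj v y := by
    intro S hconn v ⟨s, hs, hvs⟩ ⟨t, ht, hvt⟩
    obtain ⟨w⟩ := hconn.preconnected ⟨s, hs⟩ ⟨t, ht⟩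
    clear hconn
    have : ∀ (x y : S) (w : (G.induce S).Walk x y), G.Adj v x → ¬ G.Adj v y →
        ∃ x ∈ S, ∃ y ∈ S, G.Adj x y ∧ G.Adj v x ∧ ¬ G.Adj v y := by
      intro x y w
      induction w with
      | nil => intro h1 h2; exact absurd h1 h2
      | @cons a b c hab p ih =>
        intro h1 h2
        by_cases hm : G.Adj v b
        · exact ih hm h2
        · exact ⟨a, a.2, b, b.2, hab, h1, hm⟩
    exact this ⟨s, hs⟩ ⟨t, ht⟩ w hvs hvt
  intro v hv
  by_contra hcon
  push_neg at hcon
  obtain ⟨hmA, hmB⟩ := hcon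
  rw [PureTo] at hmA hmB
  push_neg at hmA hmB
  obtain ⟨⟨a, ha, hva⟩, ⟨a', ha', hva'⟩⟩ := hmA
  obtain ⟨⟨b, hb, hvb⟩, ⟨b', hb', hvb'⟩⟩ := hmB
  obtain ⟨a1, ha1, a2, ha2, ha12, hva1, hva2⟩ := key A hconnA v ⟨a', ha', hva'⟩ ⟨a, ha, hva⟩
  obtain ⟨b1, hb1, b2, hb2, hb12, hvb1, hvb2⟩ := key B hconnB v ⟨b', hb', hvb'⟩ ⟨b, hb, hvb⟩
  have hvA : v ∉ A := fun h => hv (Or.inl h)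
  have hvB : v ∉ B := fun h => hv (Or.inr h)
  -- build P5 : a2 - a1 - v - b1 - b2
  let f : Fin 5 → V := ![a2, a1, v, b1, b2]
  have hne : ∀ x ∈ A, ∀ y ∈ B, x ≠ y := fun x hx y hy hxy =>
    (hAB.ne_of_mem hx hy) hxy
  have inj : Function.Injective f := by
    have h20 : v ≠ a2 := fun h => hvA (h ▸ ha2)
    have h21 : v ≠ a1 := fun h => hvA (h ▸ ha1)
    have h23 : v ≠ b1 := fun h => hvB (h ▸ hb1)
    have h24 : v ≠ b2 := fun h => hvB (h ▸ hb2)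
    intro i j hij
    fin_cases i <;> fin_cases j <;> simp [f] at hij ⊢ <;>
      first
      | rfl
      | exact absurd hij ha12.ne'
      | exact absurd hij ha12.ne
      | exact absurd hij hb12.ne'
      | exact absurd hij hb12.ne
      | exact absurd hij (hne _ ha2 _ hb1)
      | exact absurd hij (hne _ ha2 _ hb2)
      | exact absurd hij (hne _ ha1 _ hb1)
      | exact absurd hij (hne _ ha1 _ hb2)
      | exact absurd hij.symm (hne _ ha2 _ hb1)
      | exact absurd hij.symm (hne _ ha2 _ hb2)
      | exact absurd hij.symm (hne _ ha1 _ hb1)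
      | exact absurd hij.symm (hne _ ha1 _ hb2)
      | exact absurd hij.symm h20
      | exact absurd hij.symm h21
      | exact absurd hij.symm h23
      | exact absurd hij.symm h24
      | exact absurd hij h20
      | exact absurd hij h21
      | exact absurd hij h23
      | exact absurd hij h24
  have hadj : ∀ i j, G.Adj (f i) (f j) ↔ (pathGraph 5).Adj i j := by
    have h12 : ¬ G.Adj a1 b1 := hanti _ ha1 _ hb1
    have h13 : ¬ G.Adj a1 b2 := hanti _ ha1 _ hb2
    have h02 : ¬ G.Adj a2 b1 := hanti _ ha2 _ hb1
    have h03 : ¬ G.Adj a2 b2 := hanti _ ha2 _ hb2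
    have h12' : ¬ G.Adj b1 a1 := fun h => h12 h.symm
    have h13' : ¬ G.Adj b2 a1 := fun h => h13 h.symm
    have h02' : ¬ G.Adj b1 a2 := fun h => h02 h.symm
    have h03' : ¬ G.Adj b2 a2 := fun h => h03 h.symm
    have hva2' : ¬ G.Adj a2 v := fun h => hva2 h.symm
    have hvb2' : ¬ G.Adj b2 v := fun h => hvb2 h.symm
    intro i j
    fin_cases i <;> fin_cases j <;>
      simp [f, pathGraph_adj, ha12, ha12.symm, hb12, hb12.symm, hva1, hva1.symm,
        hvb1, hvb1.symm, hva2, hvb2, h12, h13, h02, h03, h12', h13', h02', h03',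
        hva2', hvb2', G.irrefl] <;> decide
  exact hP5.false ⟨⟨f, inj⟩, hadj _ _⟩
end

section
/- Let r > 0 and let G be a graph with nonempty disjoint sets A, B ⊆ V(G) such that χ(A \ N_G(v)) ≤ r for all v ∈ B. Then for every y ∈ (0,1), either (i) there exist X ⊆ A and Y ⊆ B with χ(X) ≥ χ(A) − r and χ(Y) ≥ y²·χ(B) such that every vertex of X has χ(Y \ N_G(v)) < y·χ(Y) (i.e., X is (y,χ)-dense to Y), or (ii) there exists a nonempty D ⊆ A such that the set E of vertices in B with no neighbour in D satisfies y²·χ(B) ≤ χ(E) ≤ y·χ(B). -/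
open SimpleGraph

/-!
Take a set `D ⊆ A`, maximal under inclusion, such that the set `E(D)` of vertices of `B` with no
neighbour in `D` still has `χ(E(D)) > y χ(B)`; `D = ∅` qualifies since `y < 1`. Adding any
`a ∈ A \ D` to `D` cuts `E(D)` down to `E(D) \ N(a)`, whose chromatic number drops to at most
`y χ(B)` by maximality. If for some `a` it stays at least `y² χ(B)`, then `D ∪ {a}` gives (ii).
Otherwise `X = A \ D` and `Y = E(D)` give (i): any `v ∈ Y` has no neighbour in `D`, so
`χ(D) ≤ χ(A \ N(v)) ≤ r`, and every `a ∈ X` has `χ(Y \ N(a)) < y² χ(B) < y χ(Y)`.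
-/

namespace SimpleGraph

section chiS

variable {V : Type*} [Fintype V] (G : SimpleGraph V)

lemma chiS_colorable (S : Set V) : (G.induce S).Colorable (chiS G S) :=
  colorable_chromaticNumber_of_fintype _

variable {G}

lemma chiS_le_of_colorable {S : Set V} {n : ℕ} (h : (G.induce S).Colorable n) : chiS G S ≤ n := by
  simpa [chiS] using ENat.toNat_le_toNat h.chromaticNumber_le (ENat.natCast_ne_top n)

lemma chiS_mono {S T : Set V} (h : S ⊆ T) : chiS G S ≤ chiS G T :=
  chiS_le_of_colorable ((chiS_colorable G T).of_hom (G.induceHomOfLE h).toHom)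

lemma chiS_pos_iff {S : Set V} : 0 < chiS G S ↔ S.Nonempty := by
  have : chiS G S = 0 ↔ (G.induce S).Colorable 0 :=
    ⟨fun h => h ▸ chiS_colorable G S, fun h => Nat.le_zero.mp (chiS_le_of_colorable h)⟩
  rw [Nat.pos_iff_ne_zero, Ne, this, colorable_zero_iff, Set.isEmpty_coe_sort,
    Set.not_nonempty_iff_eq_empty.symm, not_not]

lemma chiS_union_le (S T : Set V) : chiS G (S ∪ T) ≤ chiS G S + chiS G T := by
  classical
  obtain ⟨cS⟩ := chiS_colorable G S
  obtain ⟨cT⟩ := chiS_colorable G T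
  let C : (G.induce (S ∪ T)).Coloring (Fin (chiS G S) ⊕ Fin (chiS G T)) :=
    Coloring.mk
      (fun v => if h : (v : V) ∈ S then .inl (cS ⟨v, h⟩) else .inr (cT ⟨v, v.2.resolve_left h⟩))
      (fun {v w} hvw => by
        split_ifs with hv hw hw
        · simpa using cS.valid (show (G.induce S).Adj ⟨v, hv⟩ ⟨w, hw⟩ from hvw)
        · simp
        · simp
        · simpa using cT.valid
            (show (G.induce T).Adj ⟨v, v.2.resolve_left hv⟩ ⟨w, w.2.resolve_left hw⟩ from hvw))
  simpa using chiS_le_of_colorable C.colorable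

lemma chiS_le_chiS_diff_add (S T : Set V) : chiS G S ≤ chiS G (S \ T) + chiS G T :=
  (chiS_mono (by simp)).trans (chiS_union_le (S \ T) T)

end chiS

section nonNbrs

variable {V : Type*} (G : SimpleGraph V)

def nonNbrs (B D : Set V) : Set V := {v | v ∈ B ∧ ∀ u ∈ D, ¬ G.Adj u v}

variable {G}

lemma nonNbrs_subset (B D : Set V) : G.nonNbrs B D ⊆ B := fun _ hv => hv.1

@[simp]
lemma nonNbrs_empty (B : Set V) : G.nonNbrs B ∅ = B := by
  ext; simp [nonNbrs]

lemma nonNbrs_insert (B D : Set V) (a : V) :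
    G.nonNbrs B (insert a D) = G.nonNbrs B D \ G.neighborSet a := by
  ext v
  simp only [nonNbrs, Set.mem_ofPred_eq, Set.mem_sdiff, Set.forall_mem_insert, mem_neighborSet]
  tauto

lemma subset_diff_neighborSet_of_mem_nonNbrs {A B D : Set V} {v : V} (hDA : D ⊆ A)
    (hv : v ∈ G.nonNbrs B D) : D ⊆ A \ G.neighborSet v :=
  fun u hu => ⟨hDA hu, fun huv => hv.2 u hu huv.symm⟩

lemma exists_maximal_chiS_nonNbrs_gt [Fintype V] {t : ℝ} (A : Set V) {B : Set V}
    (ht : t < chiS G B) :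
    ∃ D ⊆ A, t < chiS G (G.nonNbrs B D) ∧
      ∀ a ∈ A \ D, chiS G (G.nonNbrs B (insert a D)) ≤ t := by
  obtain ⟨D, -, ⟨hDA, hDt⟩, hDmax⟩ := Finite.exists_le_maximal
    (p := fun D : Set V => D ⊆ A ∧ t < chiS G (G.nonNbrs B D)) (a := ∅)
    ⟨Set.empty_subset A, by simpa using ht⟩
  refine ⟨D, hDA, hDt, fun a ha => ?_⟩
  by_contra! h
  exact ha.2 (hDmax ⟨Set.insert_subset ha.1 hDA, h⟩ (Set.subset_insert a D) (Set.mem_insert a D))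

end nonNbrs

end SimpleGraph

theorem stmt_2_general {V : Type*} [Fintype V] (G : SimpleGraph V)
    (r : ℝ) (A B : Set V)
    (hB : B.Nonempty)
    (hcov : ∀ v ∈ B, (chiS G (A \ G.neighborSet v) : ℝ) ≤ r)
    (y : ℝ) (hy0 : 0 < y) (hy1 : y < 1) :
    (∃ X ⊆ A, ∃ Y ⊆ B,
      (chiS G A : ℝ) - r ≤ (chiS G X : ℝ) ∧
      y ^ 2 * (chiS G B : ℝ) ≤ (chiS G Y : ℝ) ∧
      ∀ v ∈ X, (chiS G (Y \ G.neighborSet v) : ℝ) < y * (chiS G Y : ℝ)) ∨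
    (∃ D ⊆ A, D.Nonempty ∧
      y ^ 2 * (chiS G B : ℝ) ≤ (chiS G {v | v ∈ B ∧ ∀ u ∈ D, ¬ G.Adj u v} : ℝ) ∧
      (chiS G {v | v ∈ B ∧ ∀ u ∈ D, ¬ G.Adj u v} : ℝ) ≤ y * (chiS G B : ℝ)) := by
  have hχB : (0 : ℝ) < chiS G B := by exact_mod_cast chiS_pos_iff.mpr hB
  obtain ⟨D, hDA, hDE, hins⟩ :=
    exists_maximal_chiS_nonNbrs_gt A (mul_lt_of_lt_one_left hχB hy1 : y * chiS G B < chiS G B)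
  set E := G.nonNbrs B
  by_cases hcase : ∃ a ∈ A \ D, y ^ 2 * chiS G B ≤ chiS G (E (insert a D))
  · obtain ⟨a, ha, hlow⟩ := hcase
    exact Or.inr ⟨insert a D, Set.insert_subset ha.1 hDA, Set.insert_nonempty a D, hlow, hins a ha⟩
  push Not at hcase
  obtain ⟨v, hv⟩ : (E D).Nonempty :=
    chiS_pos_iff.mp (by exact_mod_cast (by positivity : (0 : ℝ) ≤ y * chiS G B).trans_lt hDE)
  have hχD : (chiS G D : ℝ) ≤ r :=
    (Nat.cast_le.mpr (chiS_mono (subset_diff_neighborSet_of_mem_nonNbrs hDA hv))).trans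
      (hcov v hv.1)
  refine Or.inl ⟨A \ D, Set.sdiff_subset, E D, nonNbrs_subset B D, ?_, ?_, fun a ha => ?_⟩
  · have := (Nat.cast_le (α := ℝ)).mpr (chiS_le_chiS_diff_add (G := G) A D)
    push_cast at this
    linarith
  · nlinarith
  · rw [← nonNbrs_insert]
    nlinarith [hcase a ha]

theorem stmt_2 {V : Type*} [Fintype V] (G : SimpleGraph V)
    (r : ℝ) (hr : 0 < r) (A B : Set V)
    (hA : A.Nonempty) (hB : B.Nonempty) (hAB : Disjoint A B)
    (hcov : ∀ v ∈ B, (chiS G (A \ G.neighborSet v) : ℝ) ≤ r)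
    (y : ℝ) (hy0 : 0 < y) (hy1 : y < 1) :
    (∃ X ⊆ A, ∃ Y ⊆ B,
      (chiS G A : ℝ) - r ≤ (chiS G X : ℝ) ∧
      y ^ 2 * (chiS G B : ℝ) ≤ (chiS G Y : ℝ) ∧
      ∀ v ∈ X, (chiS G (Y \ G.neighborSet v) : ℝ) < y * (chiS G Y : ℝ)) ∨
    (∃ D ⊆ A, D.Nonempty ∧
      y ^ 2 * (chiS G B : ℝ) ≤ (chiS G {v | v ∈ B ∧ ∀ u ∈ D, ¬ G.Adj u v} : ℝ) ∧
      (chiS G {v | v ∈ B ∧ ∀ u ∈ D, ¬ G.Adj u v} : ℝ) ≤ y * (chiS G B : ℝ)) :=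
  stmt_2_general G r A B hB hcov y hy0 hy1
end

section
/- Let G be a P5-free graph, let v be a vertex, let u ∈ N_G(v), and let C be a connected component of G \ (N_G(u) ∪ N_G(v)). Then every vertex z ∈ N_G(v) \ N_G(u) is either complete or anticomplete to V(C). -/
/-!
If `z` had a neighbour and a non-neighbour in `C`, connectivity of `C` would give an edge `ab` of
`C` with `z ~ a` and `z ≁ b`. Since `a, b` avoid `N(u) ∪ N(v)` and `z ∈ N(v) \ N(u)`, the path
`u - v - z - a - b` is induced, contradicting `P5`-freeness.
-/

open SimpleGraph

namespace SimpleGraph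

variable {V : Type*} {G : SimpleGraph V}

lemma Preconnected.exists_adj_mem_notMem (hG : G.Preconnected) {S : Set V} {x y : V}
    (hx : x ∈ S) (hy : y ∉ S) : ∃ a b, G.Adj a b ∧ a ∈ S ∧ b ∉ S := by
  obtain ⟨w⟩ := hG x y
  obtain ⟨d, -, hd⟩ := w.exists_boundary_dart S hx hy
  exact ⟨d.fst, d.snd, d.adj, hd⟩

lemma pathGraph_five_eq_of_adj_iff {i j : Fin 5}
    (h : ∀ k, (pathGraph 5).Adj k i ↔ (pathGraph 5).Adj k j) : i = j := by
  simp only [pathGraph_adj] at h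
  revert i j
  decide

lemma P5Free.false_of_isInducedPath (hG : P5Free G) {a b c d e : V}
    (hab : G.Adj a b) (hbc : G.Adj b c) (hcd : G.Adj c d) (hde : G.Adj d e)
    (hac : ¬ G.Adj a c) (had : ¬ G.Adj a d) (hae : ¬ G.Adj a e)
    (hbd : ¬ G.Adj b d) (hbe : ¬ G.Adj b e) (hce : ¬ G.Adj c e) : False := by
  have hca := mt G.adj_symm hac
  have hda := mt G.adj_symm had
  have hea := mt G.adj_symm hae
  have hdb := mt G.adj_symm hbd
  have heb := mt G.adj_symm hbe
  have hec := mt G.adj_symm hce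
  let f : Fin 5 → V := ![a, b, c, d, e]
  have hf : ∀ i j, G.Adj (f i) (f j) ↔ (pathGraph 5).Adj i j := by
    intro i j
    fin_cases i <;> fin_cases j <;>
      simp [f, pathGraph_adj, hab, hbc, hcd, hde, hac, had, hae, hbd, hbe, hce, hab.symm,
        hbc.symm, hcd.symm, hde.symm, hca, hda, hea, hdb, heb, hec]
  have hinj : Function.Injective f := fun i j hij =>
    pathGraph_five_eq_of_adj_iff fun k => by rw [← hf, ← hf, hij]
  exact hG.false ⟨⟨f, hinj⟩, hf _ _⟩

end SimpleGraph

theorem stmt_14_general {V : Type*} (G : SimpleGraph V) (hP5 : P5Free G)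
    (v u : V) (hu : u ∈ G.neighborSet v)
    (C : Set V)
    (hCsub : C ⊆ (G.neighborSet u ∪ G.neighborSet v)ᶜ)
    (hCconn : (G.induce C).Connected)
    (z : V) (hz : z ∈ G.neighborSet v \ G.neighborSet u) :
    (∀ c ∈ C, G.Adj z c) ∨ (∀ c ∈ C, ¬ G.Adj z c) := by
  by_contra! ⟨⟨x, hxC, hzx⟩, ⟨y, hyC, hzy⟩⟩
  obtain ⟨⟨a, haC⟩, ⟨b, hbC⟩, hab, hza, hzb⟩ :=
    hCconn.preconnected.exists_adj_mem_notMem (S := {c : C | G.Adj z c})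
      (x := ⟨y, hyC⟩) (y := ⟨x, hxC⟩) hzy hzx
  have hfar : ∀ c ∈ C, ¬ G.Adj u c ∧ ¬ G.Adj v c := fun c hc => by
    simpa only [Set.mem_compl_iff, Set.mem_union, mem_neighborSet, not_or] using hCsub hc
  exact hP5.false_of_isInducedPath
    (G.adj_symm hu) hz.1 hza hab hz.2 (hfar a haC).1 (hfar b hbC).1 (hfar a haC).2 (hfar b hbC).2 hzb

theorem stmt_14 {V : Type*} (G : SimpleGraph V) (hP5 : P5Free G)
    (v u : V) (hu : u ∈ G.neighborSet v)
    (C : Set V)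
    (hCsub : C ⊆ (G.neighborSet u ∪ G.neighborSet v)ᶜ)
    (hCconn : (G.induce C).Connected)
    (hCcomp : ∀ a ∈ C, ∀ b ∈ (G.neighborSet u ∪ G.neighborSet v)ᶜ, b ∉ C → ¬ G.Adj a b)
    (z : V) (hz : z ∈ G.neighborSet v \ G.neighborSet u) :
    (∀ c ∈ C, G.Adj z c) ∨ (∀ c ∈ C, ¬ G.Adj z c) :=
  stmt_14_general G hP5 v u hu C hCsub hCconn z hz
end
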